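/- arXiv:0704.1569 — 7 statements merged into one kernel-verified Lean document; each statement's English description precedes it below -/
import Mathlib

section
/- Let G be a type and ℓ1, ℓ2, ℓ3 : G → ℕ functions with ℓ3(g) ≤ ℓ2(g) ≤ ℓ1(g) for all g ∈ G. For a pair (i, j) define the distortion δ[ℓi, ℓj](n) = sSup {ℓi(g) : g ∈ G, ℓj(g) ≤ n} (supremum taken in ℕ, equal to 0 for the empty set). Assume that for every n ∈ ℕ the three sets {ℓ1(g) : ℓ3(g) ≤ n}, {ℓ1(g) : ℓ2(g) ≤ n} and {ℓ2(g) : ℓ3(g) ≤ n} are bounded above in ℕ. Then for all n ∈ ℕ: δ[ℓ1, ℓ3](n) ≤ δ[ℓ1, ℓ2](δ[ℓ2, ℓ3](n)). -/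
/-- The distortion of the length function `ℓ` with respect to `ℓ'`:
`δ[ℓ, ℓ'](n) = sup { ℓ(g) : g ∈ G, ℓ'(g) ≤ n }` (sup in `ℕ`, `0` for the empty set). -/
noncomputable def distortion {G : Type*} (ℓ ℓ' : G → ℕ) (n : ℕ) : ℕ :=
  sSup {m : ℕ | ∃ g : G, ℓ' g ≤ n ∧ ℓ g = m}

/-- If `ℓ3 ≤ ℓ2 ≤ ℓ1` pointwise and the relevant sets are bounded, then
`δ[ℓ1, ℓ3](n) ≤ δ[ℓ1, ℓ2](δ[ℓ2, ℓ3](n))`. -/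
theorem distortion_composition {G : Type*} (ℓ1 ℓ2 ℓ3 : G → ℕ)
    (h32 : ∀ g, ℓ3 g ≤ ℓ2 g) (h21 : ∀ g, ℓ2 g ≤ ℓ1 g)
    (hb13 : ∀ n : ℕ, BddAbove {m : ℕ | ∃ g : G, ℓ3 g ≤ n ∧ ℓ1 g = m})
    (hb12 : ∀ n : ℕ, BddAbove {m : ℕ | ∃ g : G, ℓ2 g ≤ n ∧ ℓ1 g = m})
    (hb23 : ∀ n : ℕ, BddAbove {m : ℕ | ∃ g : G, ℓ3 g ≤ n ∧ ℓ2 g = m}) :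
    ∀ n : ℕ, distortion ℓ1 ℓ3 n ≤ distortion ℓ1 ℓ2 (distortion ℓ2 ℓ3 n) := by
  intro n
  apply csSup_le'
  rintro m ⟨g, hg3, rfl⟩
  have h2 : ℓ2 g ≤ distortion ℓ2 ℓ3 n :=
    le_csSup (hb23 n) ⟨g, hg3, rfl⟩
  exact le_csSup (hb12 _) ⟨g, h2, rfl⟩
end

section
/- Let A be a type and let P, Q, R ⊆ A* be subsets of the free monoid A* such that PA* ∩ QA* = RA* and R is a prefix code. Then R ⊆ P ∪ Q. -/
/-- For `X ⊆ A*`, the right ideal `X A* = { x ++ w : x ∈ X, w ∈ A* }`. -/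
def rightSat {A : Type*} (X : Set (List A)) : Set (List A) :=
  {y | ∃ x ∈ X, ∃ w : List A, y = x ++ w}

/-- A prefix code: no element is a proper prefix of another element. -/
def IsPrefixCode {A : Type*} (C : Set (List A)) : Prop :=
  ∀ u ∈ C, ∀ v ∈ C, u <+: v → u = v

/-- If `P A* ∩ Q A* = R A*` and `R` is a prefix code, then `R ⊆ P ∪ Q`. -/
theorem prefixCode_of_ideal_inter {A : Type*} (P Q R : Set (List A))
    (h : rightSat P ∩ rightSat Q = rightSat R)
    (hR : IsPrefixCode R) :
    R ⊆ P ∪ Q := by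
  intro r hr
  have hrR : r ∈ rightSat P ∩ rightSat Q := by
    rw [h]; exact ⟨r, hr, [], by simp⟩
  obtain ⟨⟨p, hp, w, hw⟩, ⟨q, hq, v, hv⟩⟩ := hrR
  have hpr : p <+: r := ⟨w, hw.symm⟩
  have hqr : q <+: r := ⟨v, hv.symm⟩
  -- p and q are comparable prefixes of r
  rcases List.prefix_or_prefix_of_prefix hpr hqr with hpq | hqp
  · -- p ≤ q, so q ∈ PA* ∩ QA* = RA*, so q = r'++w', r' ∈ R, r' prefix of r ⇒ r' = r ⇒ q = r
    have hqmem : q ∈ rightSat R := by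
      rw [← h]
      exact ⟨⟨p, hp, hpq.choose, hpq.choose_spec.symm⟩, ⟨q, hq, [], by simp⟩⟩
    obtain ⟨r', hr', w', hw'⟩ := hqmem
    have heq : r' = r := hR r' hr' r hr (List.IsPrefix.trans ⟨w', hw'.symm⟩ hqr)
    rw [heq] at hw'
    -- q = r ++ w' and r = q ++ v  ⇒  q = q ++ (v ++ w')
    have h2 : q ++ (v ++ w') = q ++ [] := by
      rw [← List.append_assoc, ← hv, ← hw', List.append_nil]
    have := List.append_cancel_left h2
    have hv0 : v = [] := by
      rcases List.append_eq_nil_iff.mp this with ⟨h1, _⟩; exact h1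
    rw [hv0, List.append_nil] at hv
    exact Or.inr (hv ▸ hq)
  · have hpmem : p ∈ rightSat R := by
      rw [← h]
      exact ⟨⟨p, hp, [], by simp⟩, ⟨q, hq, hqp.choose, hqp.choose_spec.symm⟩⟩
    obtain ⟨r', hr', w', hw'⟩ := hpmem
    have heq : r' = r := hR r' hr' r hr (List.IsPrefix.trans ⟨w', hw'.symm⟩ hpr)
    rw [heq] at hw'
    have h2 : p ++ (w ++ w') = p ++ [] := by
      rw [← List.append_assoc, ← hw, ← hw', List.append_nil]
    have := List.append_cancel_left h2
    have hw0 : w = [] := by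
      rcases List.append_eq_nil_iff.mp this with ⟨h1, _⟩; exact h1
    rw [hw0, List.append_nil] at hw
    exact Or.inl (hw ▸ hp)
end

section
/- Let A be a type, let P, Q ⊆ A* be prefix codes, and let θ : A* → A* be a right-ideal homomorphism with table P → Q (i.e., θ(p) ∈ Q for every p ∈ P, and θ(p ++ w) = θ(p) ++ w for all p ∈ P and w ∈ A*). Let S ⊆ QA* be a prefix code. Then the set T = {x ∈ PA* : θ(x) ∈ S} is a prefix code, and {x ∈ PA* : θ(x) ∈ SA*} = TA*. -/
/-- Inverse image of a prefix code / right ideal under a right-ideal homomorphism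
with table `P → Q`: `θ⁻¹(S)` is a prefix code and `θ⁻¹(S A*) = θ⁻¹(S) A*`. -/
theorem invIm_of_rightIdeal {A : Type*} (P Q : Set (List A)) (θ : List A → List A)
    (hP : IsPrefixCode P) (hQ : IsPrefixCode Q)
    (hθQ : ∀ p ∈ P, θ p ∈ Q)
    (hθ : ∀ p ∈ P, ∀ w : List A, θ (p ++ w) = θ p ++ w)
    (S : Set (List A)) (hS : IsPrefixCode S) (hSQ : S ⊆ rightSat Q) :
    IsPrefixCode {x ∈ rightSat P | θ x ∈ S} ∧
    {x ∈ rightSat P | θ x ∈ rightSat S} = rightSat {x ∈ rightSat P | θ x ∈ S} := by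
  constructor
  · rintro u ⟨⟨p, hp, w, rfl⟩, hu⟩ v ⟨⟨p', hp', w', rfl⟩, hv⟩ huv
    have hpp' : p = p' := by
      rcases List.prefix_or_prefix_of_prefix ((List.prefix_append p w).trans huv)
        (List.prefix_append p' w') with h | h
      · exact hP p hp p' hp' h
      · exact (hP p' hp' p hp h).symm
    subst hpp'
    have hww' : w <+: w' := (List.prefix_append_right_inj p).mp huv
    have hθpre : θ (p ++ w) <+: θ (p ++ w') := by
      rw [hθ p hp w, hθ p hp w']
      exact (List.prefix_append_right_inj _).mpr hww'
    have heq := hS _ hu _ hv hθpre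
    rw [hθ p hp w, hθ p hp w'] at heq
    rw [List.append_cancel_left heq]
  · ext x
    constructor
    · rintro ⟨⟨p, hp, w, rfl⟩, s, hs, u, hxu⟩
      rcases hSQ hs with ⟨q, hq, v, rfl⟩
      rw [hθ p hp w] at hxu
      have hqθp : θ p = q := by
        have h1 : θ p <+: θ p ++ w := List.prefix_append _ _
        have h2 : q <+: θ p ++ w := by
          rw [hxu]; exact (List.prefix_append q v).trans (List.prefix_append _ u)
        rcases List.prefix_or_prefix_of_prefix h1 h2 with h | h
        · exact hQ _ (hθQ p hp) q hq h
        · exact (hQ q hq _ (hθQ p hp) h).symm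
      rw [← hqθp] at hxu hs
      have hw : w = v ++ u := by
        rw [List.append_assoc] at hxu
        exact List.append_cancel_left hxu
      refine ⟨p ++ v, ⟨⟨p, hp, v, rfl⟩, ?_⟩, u, by rw [hw, List.append_assoc]⟩
      rw [hθ p hp v]; exact hs
    · rintro ⟨t, ⟨⟨p, hp, v, rfl⟩, ht⟩, u, rfl⟩
      refine ⟨⟨p, hp, v ++ u, by rw [List.append_assoc]⟩, θ (p ++ v), ht, u, ?_⟩
      rw [List.append_assoc, hθ p hp, hθ p hp v, List.append_assoc]
end

section
/- Let A be a type, let P, Q ⊆ A* be finite prefix codes neither of which contains the empty word, and let φ : A* → A* be a right-ideal homomorphism with table P → Q. Let R ⊆ A* be a finite prefix code. Then every word x ∈ PA* with φ(x) ∈ R satisfies |x| < ℓ(φ) + ℓ(R), where |x| is the length of x. -/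
/-- `ℓ(S)`: the maximum of the lengths of the words in `S` (`0` if `S` is empty). -/
noncomputable def maxLen {A : Type*} (S : Set (List A)) : ℕ :=
  sSup (List.length '' S)

/-- Part (1) of Lemma `max_length_phi_P`: for a right-ideal homomorphism `φ` with table
`P → Q` (finite prefix codes not containing the empty word) and a finite prefix code `R`,
every `x ∈ P A*` with `φ(x) ∈ R` satisfies `|x| < ℓ(φ) + ℓ(R)`. -/
theorem length_invIm_lt {A : Type*} (P Q : Set (List A)) (φ : List A → List A)
    (hPfin : P.Finite) (hQfin : Q.Finite)
    (hP : IsPrefixCode P) (hQ : IsPrefixCode Q)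
    (hPe : ([] : List A) ∉ P) (hQe : ([] : List A) ∉ Q)
    (hφQ : ∀ p ∈ P, φ p ∈ Q)
    (hφ : ∀ p ∈ P, ∀ w : List A, φ (p ++ w) = φ p ++ w)
    (R : Set (List A)) (hRfin : R.Finite) (hR : IsPrefixCode R) :
    ∀ x ∈ rightSat P, φ x ∈ R → x.length < maxLen (P ∪ Q) + maxLen R := by
  have le_max : ∀ (S : Set (List A)), S.Finite → ∀ y ∈ S, y.length ≤ maxLen S := by
    intro S hS y hy
    exact le_csSup (Set.Finite.bddAbove (hS.image _)) ⟨y, hy, rfl⟩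
  rintro x ⟨p, hp, w, rfl⟩ hxR
  rw [hφ p hp w] at hxR
  have h1 : p.length ≤ maxLen (P ∪ Q) :=
    le_max _ (hPfin.union hQfin) p (Or.inl hp)
  have h2 : (φ p ++ w).length ≤ maxLen R := le_max _ hRfin _ hxR
  have h3 : 1 ≤ (φ p).length := by
    have := hφQ p hp
    rcases Nat.eq_zero_or_pos (φ p).length with h | h
    · exact absurd (List.length_eq_zero_iff.mp h ▸ this) hQe
    · exact h
  simp only [List.length_append] at h2 ⊢
  omega
end

section
/- Let A be a type, let P, Q ⊆ A* be finite prefix codes neither of which contains the empty word, and let φ : A* → A* be a right-ideal homomorphism with table P → Q. Let R ⊆ A* be a finite prefix code. Then every word x ∈ R ∩ PA* satisfies |φ(x)| < ℓ(φ) + ℓ(R), where |φ(x)| is the length of φ(x). -/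
/-- Part (2) of Lemma `max_length_phi_P`: for a right-ideal homomorphism `φ` with table
`P → Q` (finite prefix codes not containing the empty word) and a finite prefix code `R`,
every `x ∈ R ∩ P A*` satisfies `|φ(x)| < ℓ(φ) + ℓ(R)`. -/
theorem length_im_lt {A : Type*} (P Q : Set (List A)) (φ : List A → List A)
    (hPfin : P.Finite) (hQfin : Q.Finite)
    (hP : IsPrefixCode P) (hQ : IsPrefixCode Q)
    (hPe : ([] : List A) ∉ P) (hQe : ([] : List A) ∉ Q)
    (hφQ : ∀ p ∈ P, φ p ∈ Q)
    (hφ : ∀ p ∈ P, ∀ w : List A, φ (p ++ w) = φ p ++ w)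
    (R : Set (List A)) (hRfin : R.Finite) (hR : IsPrefixCode R) :
    ∀ x ∈ R ∩ rightSat P, (φ x).length < maxLen (P ∪ Q) + maxLen R := by
  intro x hx
  obtain ⟨hxR, p, hpP, w, rfl⟩ := hx
  have hφx := hφ p hpP w
  rw [hφx, List.length_append]
  -- |φ p| ≤ maxLen (P ∪ Q)
  have hbdd : BddAbove (List.length '' (P ∪ Q)) :=
    ((hPfin.union hQfin).image _).bddAbove
  have h1 : (φ p).length ≤ maxLen (P ∪ Q) :=
    le_csSup hbdd ⟨φ p, Or.inr (hφQ p hpP), rfl⟩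
  -- p nonempty
  have hp1 : 1 ≤ p.length := by
    rcases p with _ | _
    · exact absurd hpP hPe
    · simp
  have hbddR : BddAbove (List.length '' R) := (hRfin.image _).bddAbove
  have h2 : (p ++ w).length ≤ maxLen R :=
    le_csSup hbddR ⟨p ++ w, hxR, rfl⟩
  rw [List.length_append] at h2
  omega
end

section
/- Let A be a type, let R1 ⊆ A* be a right ideal, and let φ : A* → A* satisfy φ(x ++ w) = φ(x) ++ w for all x ∈ R1 and all w ∈ A*. Let R'1 ⊆ R1 be a right ideal that is essential in R1, i.e., R'1 has nonempty intersection with every right ideal of A* that has nonempty intersection with R1. Then the image sets φ(R'1) ⊆ φ(R1) are right ideals of A*, and φ(R'1) is essential in φ(R1), i.e., φ(R'1) has nonempty intersection with every right ideal of A* that has nonempty intersection with φ(R1). -/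
/-! Testing essentiality against the principal right ideal `xA*` shows that every `x ∈ R1`
extends to some `x ++ w ∈ R'1`. Then `φ x ++ w = φ (x ++ w) ∈ φ(R'1)`, and this word lies in
every right ideal containing `φ x`. -/

/-- A right ideal of the free monoid `A*`: closed under appending arbitrary words. -/
def IsRightIdeal {A : Type*} (R : Set (List A)) : Prop :=
  ∀ r ∈ R, ∀ w : List A, r ++ w ∈ R

section

variable {A : Type*}

def IsEssentialIn (R' R : Set (List A)) : Prop :=
  ∀ I : Set (List A), IsRightIdeal I → (I ∩ R).Nonempty → (I ∩ R').Nonempty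

namespace IsRightIdeal

theorem range_append (x : List A) : IsRightIdeal (Set.range (x ++ ·)) := by
  rintro _ ⟨w, rfl⟩ v
  exact ⟨w ++ v, (List.append_assoc x w v).symm⟩

theorem image {R : Set (List A)} (hR : IsRightIdeal R) {φ : List A → List A}
    (hφ : ∀ x ∈ R, ∀ w : List A, φ (x ++ w) = φ x ++ w) : IsRightIdeal (φ '' R) := by
  rintro _ ⟨x, hx, rfl⟩ w
  exact ⟨x ++ w, hR x hx w, hφ x hx w⟩

end IsRightIdeal

namespace IsEssentialIn

variable {R' R : Set (List A)}

theorem exists_append_mem (h : IsEssentialIn R' R) {x : List A} (hx : x ∈ R) :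
    ∃ w : List A, x ++ w ∈ R' := by
  obtain ⟨_, ⟨w, rfl⟩, hw⟩ :=
    h _ (IsRightIdeal.range_append x) ⟨x, ⟨[], List.append_nil x⟩, hx⟩
  exact ⟨w, hw⟩

theorem image (h : IsEssentialIn R' R) {φ : List A → List A}
    (hφ : ∀ x ∈ R, ∀ w : List A, φ (x ++ w) = φ x ++ w) :
    IsEssentialIn (φ '' R') (φ '' R) := by
  rintro I hI ⟨_, hxI, x, hx, rfl⟩
  obtain ⟨w, hw⟩ := h.exists_append_mem hx
  exact ⟨φ (x ++ w), hφ x hx w ▸ hI _ hxI w, x ++ w, hw, rfl⟩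

end IsEssentialIn

end

/-- If `R'1 ⊆ R1` are right ideals, `R'1` essential in `R1`, and `φ` is a right-ideal
homomorphism on `R1`, then `φ(R'1) ⊆ φ(R1)` are right ideals and `φ(R'1)` is essential
in `φ(R1)`. -/
theorem image_essential_of_essential {A : Type*} (R1 R'1 : Set (List A))
    (φ : List A → List A)
    (hR1 : IsRightIdeal R1) (hR'1 : IsRightIdeal R'1) (hsub : R'1 ⊆ R1)
    (hφ : ∀ x ∈ R1, ∀ w : List A, φ (x ++ w) = φ x ++ w)
    (hess : ∀ I : Set (List A), IsRightIdeal I → (I ∩ R1).Nonempty → (I ∩ R'1).Nonempty) :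
    IsRightIdeal (φ '' R1) ∧ IsRightIdeal (φ '' R'1) ∧ φ '' R'1 ⊆ φ '' R1 ∧
    (∀ I : Set (List A), IsRightIdeal I → (I ∩ φ '' R1).Nonempty →
      (I ∩ φ '' R'1).Nonempty) :=
  ⟨hR1.image hφ, hR'1.image fun x hx => hφ x (hsub hx), Set.image_mono hsub,
    IsEssentialIn.image hess hφ⟩
end

section
/- Let A be a type and let C ⊆ A* be a prefix code. Then the right ideal CA* is essential (i.e., CA* has nonempty intersection with every nonempty right ideal of A*) if and only if C is a maximal prefix code (i.e., C is not a proper subset of any prefix code over A). -/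
/-- For a prefix code `C`, the right ideal `C A*` is essential (meets every nonempty
right ideal) if and only if `C` is a maximal prefix code. -/
theorem essential_iff_maximal_prefixCode {A : Type*} (C : Set (List A))
    (hC : IsPrefixCode C) :
    (∀ I : Set (List A), IsRightIdeal I → I.Nonempty → (rightSat C ∩ I).Nonempty) ↔
    ¬ ∃ C' : Set (List A), IsPrefixCode C' ∧ C ⊂ C' := by
  constructor
  · rintro hess ⟨C', hC', hsub, hne⟩
    obtain ⟨u, huC', huC⟩ := Set.not_subset.mp hne
    obtain ⟨z, ⟨x, hxC, w, hz⟩, hzI⟩ := hess (rightSat {u})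
      (by rintro r ⟨y, hy, w, rfl⟩ w'
          exact ⟨y, hy, w ++ w', by simp⟩)
      ⟨u, u, rfl, [], by simp⟩
    obtain ⟨y, hy, w', hz'⟩ := hzI
    rcases hy with rfl
    have hx : x <+: z := ⟨w, hz.symm⟩
    have hu : y <+: z := ⟨w', hz'.symm⟩
    rcases List.prefix_or_prefix_of_prefix hx hu with h | h
    · exact huC (hC' x (hsub hxC) y huC' h ▸ hxC)
    · exact huC ((hC' y huC' x (hsub hxC) h).symm ▸ hxC)
  · intro hmax I hI ⟨r, hr⟩
    by_cases hcomp : ∃ x ∈ C, x <+: r ∨ r <+: x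
    · obtain ⟨x, hxC, h | h⟩ := hcomp
      · obtain ⟨w, rfl⟩ := h
        exact ⟨x ++ w, ⟨x, hxC, w, rfl⟩, hr⟩
      · obtain ⟨w, rfl⟩ := h
        exact ⟨r ++ w, ⟨r ++ w, hxC, [], by simp⟩, hI r hr w⟩
    · push_neg at hcomp
      exfalso
      apply hmax
      refine ⟨C ∪ {r}, ?_, ?_, ?_⟩
      · rintro u (hu | rfl) v (hv | rfl) hpre
        · exact hC u hu v hv hpre
        · exact absurd hpre (hcomp u hu).1
        · exact absurd hpre (hcomp v hv).2
        · rfl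
      · exact Set.subset_union_left
      · intro hsub
        rcases hsub (Set.mem_union_right _ rfl) with hrC
        exact (hcomp r hrC).1 (List.prefix_refl r)
end
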